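/- Suppose the next-stage value Hessian is V_{xx}^{t+1} = z zᵀ for z ∈ ℝ^{n'}. Let two parallel layers have Jacobians F_x ∈ ℝ^{n'×n}, F_u ∈ ℝ^{n'×m} (parameter u) and H_{x_r} ∈ ℝ^{n'×r}, H_v ∈ ℝ^{n'×p} (parameter v), with symmetric invertible curvatures Q_uu ∈ ℝ^{m×m}, Q_vv ∈ ℝ^{p×p} and vanishing cross curvature Q_uv = 0. Set q_x = F_xᵀ z, q_u = F_uᵀ z, q_v = H_vᵀ z. Then under the Gauss–Newton expansion, the jointly minimized value Hessian block satisfies F_xᵀ V_{xx}^{t+1} F_x − (F_uᵀ V_{xx}^{t+1} F_x)ᵀ Q_uu⁻¹ (F_uᵀ V_{xx}^{t+1} F_x) − (H_vᵀ V_{xx}^{t+1} F_x)ᵀ Q_vv⁻¹ (H_vᵀ V_{xx}^{t+1} F_x) = (1 − q_uᵀ Q_uu⁻¹ q_u − q_vᵀ Q_vv⁻¹ q_v) q_x q_xᵀ; hence in the cooperative stage both players contribute their own rescaling term to the common scalar factor of the outer-product factorization. -/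

import Mathlib

open Matrix

/-
Every block `Aᵀ (z zᵀ) B` of the Gauss–Newton expanded Hessian is the outer product
`(Aᵀ z)(Bᵀ z)ᵀ`. Hence each Schur correction `(q xᵀ)ᵀ M (q xᵀ)` is the scalar `qᵀ M q` times
`x xᵀ`, and all three terms are multiples of `q_x q_xᵀ`.
-/

section

variable {α k l m n : Type*} [CommSemiring α] [Fintype k] [Fintype m]

theorem transpose_mul_vecMulVec_mul (A : Matrix k l α) (B : Matrix k n α) (z : k → α) :
    Aᵀ * vecMulVec z z * B = vecMulVec (Aᵀ *ᵥ z) (Bᵀ *ᵥ z) := by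
  rw [mul_vecMulVec, vecMulVec_mul, ← mulVec_transpose]

theorem transpose_vecMulVec_mul_mul_vecMulVec (q : m → α) (x : n → α) (M : Matrix m m α) :
    (vecMulVec q x)ᵀ * M * vecMulVec q x = (q ⬝ᵥ (M *ᵥ q)) • vecMulVec x x := by
  rw [transpose_vecMulVec, vecMulVec_mul, vecMulVec_mul_vecMulVec, vecMulVec_smul,
    dotProduct_mulVec]

end

theorem gtddp_cooperative_outer_product_general {n npr m p : ℕ}
    (z : Fin npr → ℝ)
    (Fx : Matrix (Fin npr) (Fin n) ℝ) (Fu : Matrix (Fin npr) (Fin m) ℝ)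
    (Hv : Matrix (Fin npr) (Fin p) ℝ)
    (Quu : Matrix (Fin m) (Fin m) ℝ) (Qvv : Matrix (Fin p) (Fin p) ℝ) :
    let Vxx1 := vecMulVec z z
    let qx := Fxᵀ *ᵥ z
    let qu := Fuᵀ *ᵥ z
    let qv := Hvᵀ *ᵥ z
    Fxᵀ * Vxx1 * Fx
        - (Fuᵀ * Vxx1 * Fx)ᵀ * Quu⁻¹ * (Fuᵀ * Vxx1 * Fx)
        - (Hvᵀ * Vxx1 * Fx)ᵀ * Qvv⁻¹ * (Hvᵀ * Vxx1 * Fx)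
      = (1 - qu ⬝ᵥ (Quu⁻¹ *ᵥ qu) - qv ⬝ᵥ (Qvv⁻¹ *ᵥ qv)) • vecMulVec qx qx := by
  intro Vxx1 qx qu qv
  simp only [Vxx1, qx, qu, qv, transpose_mul_vecMulVec_mul,
    transpose_vecMulVec_mul_mul_vecMulVec, sub_smul, one_smul]

/-- At a cooperative stage with vanishing cross curvature, both players add
their own rescaling term to the common scalar factor of the outer-product factorization. -/
theorem gtddp_cooperative_outer_product {n npr m p r : ℕ}
    (z : Fin npr → ℝ)
    (Fx : Matrix (Fin npr) (Fin n) ℝ) (Fu : Matrix (Fin npr) (Fin m) ℝ)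
    (Hxr : Matrix (Fin npr) (Fin r) ℝ) (Hv : Matrix (Fin npr) (Fin p) ℝ)
    (Quu : Matrix (Fin m) (Fin m) ℝ) (Qvv : Matrix (Fin p) (Fin p) ℝ)
    (Quv : Matrix (Fin m) (Fin p) ℝ)
    (hQuusymm : Quu.IsSymm) (hQuuinv : IsUnit Quu.det)
    (hQvvsymm : Qvv.IsSymm) (hQvvinv : IsUnit Qvv.det)
    (hQuv : Quv = 0) :
    let Vxx1 := vecMulVec z z
    let qx := Fxᵀ *ᵥ z
    let qu := Fuᵀ *ᵥ z
    let qv := Hvᵀ *ᵥ z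
    Fxᵀ * Vxx1 * Fx
        - (Fuᵀ * Vxx1 * Fx)ᵀ * Quu⁻¹ * (Fuᵀ * Vxx1 * Fx)
        - (Hvᵀ * Vxx1 * Fx)ᵀ * Qvv⁻¹ * (Hvᵀ * Vxx1 * Fx)
      = (1 - qu ⬝ᵥ (Quu⁻¹ *ᵥ qu) - qv ⬝ᵥ (Qvv⁻¹ *ᵥ qv)) • vecMulVec qx qx :=
  gtddp_cooperative_outer_product_general z Fx Fu Hv Quu Qvv
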